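/- If ν_min < 0 < ν_max, then the P2 dissipation function d_P2(ν) = d_HLL(ν) + α(ν−ν_min)(ν−ν_max), with α = (ν_max − ν_min − ||ν_max| − |ν_min||)/(ν_max − ν_min)², satisfies d_P2(ν) ≥ |ν| for all ν ∈ [ν_min, ν_max]. -/
import Mathlib

set_option maxHeartbeats 1000000 in
theorem stmt_5 (νmin νmax : ℝ) (h1 : νmin < 0) (h2 : 0 < νmax)
    (dHLL : ℝ → ℝ) (a b : ℝ) (haff : ∀ ν, dHLL ν = a * ν + b)
    (hL : dHLL νmin = |νmin|) (hR : dHLL νmax = |νmax|)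
    (α : ℝ)
    (hα : α = (νmax - νmin - |(|νmax| - |νmin|)|) / (νmax - νmin) ^ 2)
    (dP2 : ℝ → ℝ)
    (hP2 : ∀ ν, dP2 ν = dHLL ν + α * (ν - νmin) * (ν - νmax)) :
    ∀ ν ∈ Set.Icc νmin νmax, |ν| ≤ dP2 ν := by
  have hD : 0 < νmax - νmin := by linarith
  have hD2 : 0 < (νmax - νmin) ^ 2 := by positivity
  have ha1 : a * νmin + b = -νmin := by
    have := hL; rw [haff, abs_of_neg h1] at this; linarith
  have ha2 : a * νmax + b = νmax := by
    have := hR; rw [haff, abs_of_pos h2] at this; linarith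
  have habs : |νmax| - |νmin| = νmax + νmin := by
    rw [abs_of_pos h2, abs_of_neg h1]; ring
  have haD : a * (νmax - νmin) = νmax + νmin := by linarith
  have hbD : b * (νmax - νmin) = -2 * νmin * νmax := by nlinarith [ha1, haD]
  have hαD : α * (νmax - νmin) ^ 2 = νmax - νmin - |νmax + νmin| := by
    rw [hα, habs, div_mul_cancel₀ _ (ne_of_gt hD2)]
  intro ν hν
  obtain ⟨hm, hM⟩ := hν
  rw [hP2, haff]
  rcases le_or_gt 0 (νmax + νmin) with hs | hs
  · have hα2 : α * (νmax - νmin) ^ 2 = -2 * νmin := by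
      rw [hαD, abs_of_nonneg hs]; ring
    rcases le_or_gt 0 ν with hn | hn
    · rw [abs_of_nonneg hn]
      have key : (νmax - νmin) ^ 2 * (a * ν + b + α * (ν - νmin) * (ν - νmax) - ν)
          = -2 * νmin * (ν - νmax) ^ 2 := by
        linear_combination ((νmax - νmin) * ν) * haD + (νmax - νmin) * hbD
          + ((ν - νmin) * (ν - νmax)) * hα2
      have h0 : 0 ≤ -2 * νmin * (ν - νmax) ^ 2 := by nlinarith [sq_nonneg (ν - νmax)]
      nlinarith [key, h0, hD2]
    · rw [abs_of_neg hn]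
      have key : (νmax - νmin) ^ 2 * (a * ν + b + α * (ν - νmin) * (ν - νmax) + ν)
          = 2 * (ν - νmin) * (νmax ^ 2 - νmin * ν) := by
        linear_combination ((νmax - νmin) * ν) * haD + (νmax - νmin) * hbD
          + ((ν - νmin) * (ν - νmax)) * hα2
      have hfac : 0 ≤ νmax ^ 2 - νmin * ν := by
        nlinarith [mul_nonneg (le_of_lt hD) (by linarith : (0:ℝ) ≤ νmax + νmin),
          mul_le_mul_of_nonpos_left hm (le_of_lt h1)]
      have h0 : 0 ≤ 2 * (ν - νmin) * (νmax ^ 2 - νmin * ν) :=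
        mul_nonneg (by linarith) hfac
      nlinarith [key, h0, hD2]
  · have hα2 : α * (νmax - νmin) ^ 2 = 2 * νmax := by
      rw [hαD, abs_of_neg hs]; ring
    rcases le_or_gt 0 ν with hn | hn
    · rw [abs_of_nonneg hn]
      have key : (νmax - νmin) ^ 2 * (a * ν + b + α * (ν - νmin) * (ν - νmax) - ν)
          = 2 * (νmax - ν) * (νmin ^ 2 - νmax * ν) := by
        linear_combination ((νmax - νmin) * ν) * haD + (νmax - νmin) * hbD
          + ((ν - νmin) * (ν - νmax)) * hα2
      have hfac : 0 ≤ νmin ^ 2 - νmax * ν := by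
        nlinarith [mul_pos hD (by linarith : (0:ℝ) < -(νmax + νmin)),
          mul_le_mul_of_nonneg_left hM (le_of_lt h2)]
      have h0 : 0 ≤ 2 * (νmax - ν) * (νmin ^ 2 - νmax * ν) :=
        mul_nonneg (by linarith) hfac
      nlinarith [key, h0, hD2]
    · rw [abs_of_neg hn]
      have key : (νmax - νmin) ^ 2 * (a * ν + b + α * (ν - νmin) * (ν - νmax) + ν)
          = 2 * νmax * (ν - νmin) ^ 2 := by
        linear_combination ((νmax - νmin) * ν) * haD + (νmax - νmin) * hbD
          + ((ν - νmin) * (ν - νmax)) * hα2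
      have h0 : 0 ≤ 2 * νmax * (ν - νmin) ^ 2 := by positivity
      nlinarith [key, h0, hD2]
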